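/- arXiv:2105.05228 — 3 statements merged into one kernel-verified Lean document; each statement's English description precedes it below -/
import Mathlib

section
/- Under the Regularity assumption, any solution W of the MF ODEs with initialization satisfying |||W|||_0 < ∞ obeys, for every T ≥ 0 and a constant K depending only on the constants of the Regularity assumption: ess-sup sup_{t≤T} |w3(t,C2)| ≤ |||W|||_0 + K·T, and ess-sup sup_{t≤T} |w2(t,C1,C2)| ≤ |||W|||_0 + K·T·(|||W|||_0 + K·T); consequently |||W|||_T < ∞ for every T. -/
open scoped RealInnerProductSpace ENNReal

noncomputable section

namespace ThreeLayerMF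

/-- `ℝ^d`. -/
abbrev Vec (d : ℕ) : Type := EuclideanSpace ℝ (Fin d)

/-- A neuronal embedding: a product probability space `Ω1 × Ω2` together with measurable
initial weight functions `w10, w20, w30`. -/
structure NeuronalEmbedding (d : ℕ) : Type 1 where
  Ω1 : Type
  Ω2 : Type
  [m1 : MeasurableSpace Ω1]
  [m2 : MeasurableSpace Ω2]
  P1 : MeasureTheory.Measure Ω1
  P2 : MeasureTheory.Measure Ω2
  [prob1 : MeasureTheory.IsProbabilityMeasure P1]
  [prob2 : MeasureTheory.IsProbabilityMeasure P2]
  w10 : Ω1 → Vec d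
  w20 : Ω1 → Ω2 → ℝ
  w30 : Ω2 → ℝ
  meas10 : Measurable w10
  meas20 : Measurable fun p : Ω1 × Ω2 => w20 p.1 p.2
  meas30 : Measurable w30

attribute [instance] NeuronalEmbedding.m1 NeuronalEmbedding.m2
attribute [instance] NeuronalEmbedding.prob1 NeuronalEmbedding.prob2

open MeasureTheory

/-- The data of a three-layer mean-field problem: activations `φ1, φ2, φ3` together with
their derivatives `dφ1, dφ2, dφ3`, the loss `L` with its partial derivative `dL` in the
second variable, learning rate schedules `ξ1, ξ2, ξ3`, and the data distribution `P`. -/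
structure MFSetup (d : ℕ) where
  φ1 : ℝ → ℝ
  φ2 : ℝ → ℝ
  φ3 : ℝ → ℝ
  dφ1 : ℝ → ℝ
  dφ2 : ℝ → ℝ
  dφ3 : ℝ → ℝ
  L : ℝ → ℝ → ℝ
  dL : ℝ → ℝ → ℝ
  ξ1 : ℝ → ℝ
  ξ2 : ℝ → ℝ
  ξ3 : ℝ → ℝ
  P : Measure (Vec d × ℝ)

/-- Assumption 1 (Regularity) with constant `K`. -/
structure Regularity {d : ℕ} (S : MFSetup d) (K : ℝ) : Prop where
  Kpos : 0 < K
  prob : IsProbabilityMeasure S.P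
  hdφ1 : ∀ x, HasDerivAt S.φ1 (S.dφ1 x) x
  hdφ2 : ∀ x, HasDerivAt S.φ2 (S.dφ2 x) x
  hdφ3 : ∀ x, HasDerivAt S.φ3 (S.dφ3 x) x
  hdL : ∀ y v, HasDerivAt (fun w => S.L y w) (S.dL y v) v
  measL : Measurable fun p : ℝ × ℝ => S.L p.1 p.2
  measdL : Measurable fun p : ℝ × ℝ => S.dL p.1 p.2
  Lnonneg : ∀ y v, 0 ≤ S.L y v
  bφ1 : ∀ x, |S.φ1 x| ≤ K
  bφ2 : ∀ x, |S.φ2 x| ≤ K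
  bdφ1 : ∀ x, |S.dφ1 x| ≤ K
  bdφ2 : ∀ x, |S.dφ2 x| ≤ K
  bdφ3 : ∀ x, |S.dφ3 x| ≤ K
  lipdφ1 : LipschitzWith K.toNNReal S.dφ1
  lipdφ2 : LipschitzWith K.toNNReal S.dφ2
  lipdφ3 : LipschitzWith K.toNNReal S.dφ3
  nzdφ2 : ∀ x, S.dφ2 x ≠ 0
  nzdφ3 : ∀ x, S.dφ3 x ≠ 0
  bdL : ∀ y v, |S.dL y v| ≤ K
  lipdL : ∀ y, LipschitzWith K.toNNReal fun v => S.dL y v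
  bX : ∀ᵐ z ∂S.P, ‖z.1‖ ≤ K
  ξ1nonneg : ∀ t, 0 ≤ S.ξ1 t
  ξ2nonneg : ∀ t, 0 ≤ S.ξ2 t
  ξ3nonneg : ∀ t, 0 ≤ S.ξ3 t
  bξ1 : ∀ t, S.ξ1 t ≤ K
  bξ2 : ∀ t, S.ξ2 t ≤ K
  bξ3 : ∀ t, S.ξ3 t ≤ K
  lipξ1 : LipschitzWith K.toNNReal S.ξ1
  lipξ2 : LipschitzWith K.toNNReal S.ξ2
  lipξ3 : LipschitzWith K.toNNReal S.ξ3

/-- A mean-field parameter trajectory `W(t) = (w1(t,·), w2(t,·,·), w3(t,·))` over the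
neuronal ensemble `Ω1 × Ω2`, measurable in the ensemble variables at each time. -/
structure MFTraj (d : ℕ) (Ω1 Ω2 : Type*) [MeasurableSpace Ω1] [MeasurableSpace Ω2] where
  w1 : ℝ → Ω1 → Vec d
  w2 : ℝ → Ω1 → Ω2 → ℝ
  w3 : ℝ → Ω2 → ℝ
  meas1 : ∀ t, Measurable (w1 t)
  meas2 : ∀ t, Measurable fun p : Ω1 × Ω2 => w2 t p.1 p.2
  meas3 : ∀ t, Measurable (w3 t)

variable {d : ℕ} {Ω1 Ω2 : Type*} [MeasurableSpace Ω1] [MeasurableSpace Ω2]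

/-- `H2(x, c2; W(t)) = E_{C1}[w2(t,C1,c2) φ1(⟨w1(t,C1), x⟩)]`. -/
def H2 (S : MFSetup d) (P1 : Measure Ω1) (W : MFTraj d Ω1 Ω2) (t : ℝ) (x : Vec d) (c2 : Ω2) : ℝ :=
  ∫ c1, W.w2 t c1 c2 * S.φ1 ⟪W.w1 t c1, x⟫ ∂P1

/-- `H3(x; W(t)) = E_{C2}[w3(t,C2) φ2(H2(x,C2;W(t)))]`. -/
def H3 (S : MFSetup d) (P1 : Measure Ω1) (P2 : Measure Ω2) (W : MFTraj d Ω1 Ω2)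
    (t : ℝ) (x : Vec d) : ℝ :=
  ∫ c2, W.w3 t c2 * S.φ2 (H2 S P1 W t x c2) ∂P2

/-- `ŷ(x; W(t)) = φ3(H3(x;W(t)))`. -/
def yhat (S : MFSetup d) (P1 : Measure Ω1) (P2 : Measure Ω2) (W : MFTraj d Ω1 Ω2)
    (t : ℝ) (x : Vec d) : ℝ :=
  S.φ3 (H3 S P1 P2 W t x)

/-- `Δ2^H(z, c2; W(t))`. -/
def D2H (S : MFSetup d) (P1 : Measure Ω1) (P2 : Measure Ω2) (W : MFTraj d Ω1 Ω2) (t : ℝ)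
    (z : Vec d × ℝ) (c2 : Ω2) : ℝ :=
  S.dL z.2 (yhat S P1 P2 W t z.1) * S.dφ3 (H3 S P1 P2 W t z.1) * W.w3 t c2 *
    S.dφ2 (H2 S P1 W t z.1 c2)

/-- `Δ3(c2; W(t))`. -/
def D3 (S : MFSetup d) (P1 : Measure Ω1) (P2 : Measure Ω2) (W : MFTraj d Ω1 Ω2)
    (t : ℝ) (c2 : Ω2) : ℝ :=
  ∫ z, S.dL z.2 (yhat S P1 P2 W t z.1) * S.dφ3 (H3 S P1 P2 W t z.1) *
    S.φ2 (H2 S P1 W t z.1 c2) ∂S.P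

/-- `Δ2(c1, c2; W(t))`. -/
def D2 (S : MFSetup d) (P1 : Measure Ω1) (P2 : Measure Ω2) (W : MFTraj d Ω1 Ω2)
    (t : ℝ) (c1 : Ω1) (c2 : Ω2) : ℝ :=
  ∫ z, D2H S P1 P2 W t z c2 * S.φ1 ⟪W.w1 t c1, z.1⟫ ∂S.P

/-- `Δ1(c1; W(t))`. -/
def D1 (S : MFSetup d) (P1 : Measure Ω1) (P2 : Measure Ω2) (W : MFTraj d Ω1 Ω2)
    (t : ℝ) (c1 : Ω1) : Vec d :=
  ∫ z, ((∫ c2, D2H S P1 P2 W t z c2 * W.w2 t c1 c2 ∂P2) * S.dφ1 ⟪W.w1 t c1, z.1⟫) • z.1 ∂S.P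

/-- `W` solves the MF ODEs on `[0, ∞)`. -/
def IsMFSol (S : MFSetup d) (P1 : Measure Ω1) (P2 : Measure Ω2) (W : MFTraj d Ω1 Ω2) : Prop :=
  (∀ c2, ∀ t ∈ Set.Ici (0:ℝ),
      HasDerivWithinAt (fun s => W.w3 s c2) (-(S.ξ3 t * D3 S P1 P2 W t c2)) (Set.Ici 0) t) ∧
  (∀ c1 c2, ∀ t ∈ Set.Ici (0:ℝ),
      HasDerivWithinAt (fun s => W.w2 s c1 c2) (-(S.ξ2 t * D2 S P1 P2 W t c1 c2)) (Set.Ici 0) t) ∧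
  (∀ c1, ∀ t ∈ Set.Ici (0:ℝ),
      HasDerivWithinAt (fun s => W.w1 s c1) ((-(S.ξ1 t)) • D1 S P1 P2 W t c1) (Set.Ici 0) t)

/-- Finite-width network parameters. -/
structure NNParams (d n1 n2 : ℕ) where
  a1 : Fin n1 → Vec d
  a2 : Fin n1 → Fin n2 → ℝ
  a3 : Fin n2 → ℝ

variable {n1 n2 : ℕ}

/-- `𝐇2(x, j2; 𝐖)`. -/
def nH2 (S : MFSetup d) (Wp : NNParams d n1 n2) (x : Vec d) (j2 : Fin n2) : ℝ :=
  (n1 : ℝ)⁻¹ * ∑ j1, Wp.a2 j1 j2 * S.φ1 ⟪Wp.a1 j1, x⟫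

/-- `𝐇3(x; 𝐖)`. -/
def nH3 (S : MFSetup d) (Wp : NNParams d n1 n2) (x : Vec d) : ℝ :=
  (n2 : ℝ)⁻¹ * ∑ j2, Wp.a3 j2 * S.φ2 (nH2 S Wp x j2)

/-- `ŷ(x; 𝐖)`. -/
def nyhat (S : MFSetup d) (Wp : NNParams d n1 n2) (x : Vec d) : ℝ := S.φ3 (nH3 S Wp x)

/-- `Δ2^𝐇(z, j2; 𝐖)`. -/
def nD2H (S : MFSetup d) (Wp : NNParams d n1 n2) (z : Vec d × ℝ) (j2 : Fin n2) : ℝ :=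
  S.dL z.2 (nyhat S Wp z.1) * S.dφ3 (nH3 S Wp z.1) * Wp.a3 j2 * S.dφ2 (nH2 S Wp z.1 j2)

/-- One SGD step at time `k` with step size `ε` and sample `z`. -/
def sgdStep (S : MFSetup d) (ε : ℝ) (k : ℕ) (z : Vec d × ℝ) (Wp : NNParams d n1 n2) :
    NNParams d n1 n2 where
  a1 := fun j1 => Wp.a1 j1 -
    (ε * S.ξ1 (k * ε) * (((n2 : ℝ)⁻¹ * ∑ j2, nD2H S Wp z j2 * Wp.a2 j1 j2) *
      S.dφ1 ⟪Wp.a1 j1, z.1⟫)) • z.1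
  a2 := fun j1 j2 => Wp.a2 j1 j2 - ε * S.ξ2 (k * ε) * (nD2H S Wp z j2 * S.φ1 ⟪Wp.a1 j1, z.1⟫)
  a3 := fun j2 => Wp.a3 j2 - ε * S.ξ3 (k * ε) *
    (S.dL z.2 (nyhat S Wp z.1) * S.dφ3 (nH3 S Wp z.1) * S.φ2 (nH2 S Wp z.1 j2))

/-- The SGD trajectory started from `W0` using the data sequence `data`. -/
def sgdTraj (S : MFSetup d) (ε : ℝ) (data : ℕ → Vec d × ℝ) (W0 : NNParams d n1 n2) :
    ℕ → NNParams d n1 n2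
  | 0 => W0
  | k + 1 => sgdStep S ε k (data k) (sgdTraj S ε data W0 k)

/-- Network initialization obtained from a neuronal embedding and sampled neurons. -/
def netInit (w10 : Ω1 → Vec d) (w20 : Ω1 → Ω2 → ℝ) (w30 : Ω2 → ℝ)
    (c1 : Fin n1 → Ω1) (c2 : Fin n2 → Ω2) : NNParams d n1 n2 where
  a1 := fun j1 => w10 (c1 j1)
  a2 := fun j1 j2 => w20 (c1 j1) (c2 j2)
  a3 := fun j2 => w30 (c2 j2)

/-- `V` solves the particle ODEs on `[0, ∞)`. -/
def IsParticleSol (S : MFSetup d) (V : ℝ → NNParams d n1 n2) : Prop :=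
  (∀ j2 : Fin n2, ∀ t ∈ Set.Ici (0:ℝ), HasDerivWithinAt (fun s => (V s).a3 j2)
      (-(S.ξ3 t * ∫ z, S.dL z.2 (nyhat S (V t) z.1) * S.dφ3 (nH3 S (V t) z.1) *
        S.φ2 (nH2 S (V t) z.1 j2) ∂S.P)) (Set.Ici 0) t) ∧
  (∀ (j1 : Fin n1) (j2 : Fin n2), ∀ t ∈ Set.Ici (0:ℝ),
      HasDerivWithinAt (fun s => (V s).a2 j1 j2)
      (-(S.ξ2 t * ∫ z, nD2H S (V t) z j2 * S.φ1 ⟪(V t).a1 j1, z.1⟫ ∂S.P)) (Set.Ici 0) t) ∧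
  (∀ j1 : Fin n1, ∀ t ∈ Set.Ici (0:ℝ), HasDerivWithinAt (fun s => (V s).a1 j1)
      ((-(S.ξ1 t)) • ∫ z, (((n2 : ℝ)⁻¹ * ∑ j2, nD2H S (V t) z j2 * (V t).a2 j1 j2) *
        S.dφ1 ⟪(V t).a1 j1, z.1⟫) • z.1 ∂S.P) (Set.Ici 0) t)

/-- The coupling sample space carries i.i.d. neurons `Cs1 ~ P1^{n1}`, `Cs2 ~ P2^{n2}` and an
i.i.d. data sequence `Data ~ 𝒫^ℕ`, all mutually independent. -/
def IsCoupling (S : MFSetup d) (P1 : Measure Ω1) (P2 : Measure Ω2)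
    [IsProbabilityMeasure P1] [IsProbabilityMeasure P2]
    {Θ : Type*} [MeasurableSpace Θ] (μ : Measure Θ)
    (Cs1 : Θ → Fin n1 → Ω1) (Cs2 : Θ → Fin n2 → Ω2) (Data : Θ → ℕ → Vec d × ℝ) : Prop :=
  Measurable Cs1 ∧ Measurable Cs2 ∧ Measurable Data ∧
  Measure.map Cs1 μ = Measure.pi (fun _ => P1) ∧
  Measure.map Cs2 μ = Measure.pi (fun _ => P2) ∧
  (∀ k, Measure.map (fun θ => Data θ k) μ = S.P) ∧
  ProbabilityTheory.iIndepFun (fun k θ => Data θ k) μ ∧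
  ProbabilityTheory.IndepFun Cs1 Cs2 μ ∧
  ProbabilityTheory.IndepFun (fun θ => (Cs1 θ, Cs2 θ)) Data μ

/-- The constant `K_T = K (1 + T^K)`. -/
def KT (K T : ℝ) : ℝ := K * (1 + T ^ K)

/-- The error bound of the main coupling theorem. -/
def errMain (K : ℝ) (n1 n2 : ℕ) (ε δ T : ℝ) : ℝ :=
  Real.exp (KT K T) * ((Real.sqrt (min n1 n2 : ℕ))⁻¹ + Real.sqrt ε) *
    Real.sqrt (Real.log (3 * (T + 1) * ((max n1 n2 : ℕ) : ℝ) ^ 2 / δ + Real.exp 1))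

/-- The `(ρ1, ρ2, ρ3)`-i.i.d. initialization law for a network of widths `(n1, n2)`. -/
def iidInitLaw (d n1 n2 : ℕ) (ρ1 : Measure (Vec d)) (ρ2 ρ3 : Measure ℝ)
    [IsProbabilityMeasure ρ1] [IsProbabilityMeasure ρ2] [IsProbabilityMeasure ρ3] :
    Measure ((Fin n1 → Vec d) × (Fin n1 → Fin n2 → ℝ) × (Fin n2 → ℝ)) :=
  (Measure.pi fun _ => ρ1).prod
    ((Measure.pi fun _ : Fin n1 => Measure.pi fun _ : Fin n2 => ρ2).prod (Measure.pi fun _ => ρ3))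

/-- The law of the initial network parameters produced by a neuronal embedding
`(P1, P2, w10, w20, w30)` at widths `(n1, n2)`. -/
def embedLaw (P1 : Measure Ω1) (P2 : Measure Ω2)
    [IsProbabilityMeasure P1] [IsProbabilityMeasure P2]
    (w10 : Ω1 → Vec d) (w20 : Ω1 → Ω2 → ℝ) (w30 : Ω2 → ℝ) (n1 n2 : ℕ) :
    Measure ((Fin n1 → Vec d) × (Fin n1 → Fin n2 → ℝ) × (Fin n2 → ℝ)) :=
  Measure.map (fun c : (Fin n1 → Ω1) × (Fin n2 → Ω2) =>
      (fun j1 => w10 (c.1 j1), fun j1 j2 => w20 (c.1 j1) (c.2 j2), fun j2 => w30 (c.2 j2)))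
    ((Measure.pi fun _ => P1).prod (Measure.pi fun _ => P2))

/-- The loss functional `𝓛(v1, v2, v3) = E_Z[L(Y, ŷ(X; V))]` (as an extended nonnegative real). -/
def lossOf (S : MFSetup d) (P1 : Measure Ω1) (P2 : Measure Ω2)
    (v1 : Ω1 → Vec d) (v2 : Ω1 → Ω2 → ℝ) (v3 : Ω2 → ℝ) : ℝ≥0∞ :=
  ∫⁻ z, ENNReal.ofReal (S.L z.2 (S.φ3 (∫ c2, v3 c2 *
    S.φ2 (∫ c1, v2 c1 c2 * S.φ1 ⟪v1 c1, z.1⟫ ∂P1) ∂P2))) ∂S.P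

/-- The topological support of a measure. -/
def msupport {α : Type*} [TopologicalSpace α] [MeasurableSpace α] (μ : Measure α) : Set α :=
  {x | ∀ U : Set α, IsOpen U → x ∈ U → 0 < μ U}

/-- The law of the collection `𝒲(n1, n2, T)` of MF weights evaluated along sampled neurons. -/
def trajLaw (P1 : Measure Ω1) (P2 : Measure Ω2)
    [IsProbabilityMeasure P1] [IsProbabilityMeasure P2]
    (W : MFTraj d Ω1 Ω2) (n1 n2 : ℕ) (T : ℝ) :
    Measure (Set.Icc (0:ℝ) T → Fin n1 → Fin n2 → Vec d × ℝ × ℝ) :=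
  Measure.map (fun c : (Fin n1 → Ω1) × (Fin n2 → Ω2) =>
      fun (t : Set.Icc (0:ℝ) T) j1 j2 =>
        (W.w1 t (c.1 j1), W.w2 t (c.1 j1) (c.2 j2), W.w3 t (c.2 j2)))
    ((Measure.pi fun _ => P1).prod (Measure.pi fun _ => P2))

end ThreeLayerMF

namespace ThreeLayerMF
open MeasureTheory
open scoped RealInnerProductSpace

universe u v

/-!
Since `∂₂L`, `φ3'` and `φ2` are bounded, `|Δ3| ≤ K³`, so `w3` moves at speed at most `K⁴` and grows
at most linearly. `Δ2` is a bounded factor times `w3`, so `|Δ2| ≤ K⁴ |w3|`: the speed of `w2` is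
itself linearly bounded, which gives the quadratic bound on `w2`.
-/

section Bounds

open Set

theorem norm_le_add_mul_of_hasDerivWithinAt_Ici {E : Type*} [NormedAddCommGroup E]
    [NormedSpace ℝ E] {f f' : ℝ → E} {C t : ℝ} (ht : 0 ≤ t)
    (hf : ∀ s ∈ Icc 0 t, HasDerivWithinAt f (f' s) (Ici 0) s)
    (hC : ∀ s ∈ Icc 0 t, ‖f' s‖ ≤ C) : ‖f t‖ ≤ ‖f 0‖ + C * t := by
  have hmv := (convex_Icc 0 t).norm_image_sub_le_of_norm_hasDerivWithin_le
    (fun s hs => (hf s hs).mono Icc_subset_Ici_self) hC (left_mem_Icc.2 ht) (right_mem_Icc.2 ht)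
  rw [sub_zero, Real.norm_of_nonneg ht] at hmv
  calc ‖f t‖ ≤ ‖f 0‖ + ‖f t - f 0‖ := norm_le_insert' _ _
    _ ≤ ‖f 0‖ + C * t := by gcongr

theorem abs_integral_le_of_forall_abs_le {α : Type*} [MeasurableSpace α] {μ : Measure α}
    [IsProbabilityMeasure μ] {f : α → ℝ} {C : ℝ} (h : ∀ x, |f x| ≤ C) : |∫ x, f x ∂μ| ≤ C := by
  simpa using norm_integral_le_of_norm_le_const (μ := μ) (f := f) (C := C)
    (Filter.Eventually.of_forall h)

theorem abs_mul_le_mul_of_abs_le {a b A B : ℝ} (ha : |a| ≤ A) (hb : |b| ≤ B) :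
    |a * b| ≤ A * B := by
  rw [abs_mul]
  exact mul_le_mul ha hb (abs_nonneg b) ((abs_nonneg a).trans ha)

variable {d : ℕ} {Ω1 Ω2 : Type*} [MeasurableSpace Ω1] [MeasurableSpace Ω2]
  {S : MFSetup d} {K : ℝ} {P1 : Measure Ω1} {P2 : Measure Ω2} {W : MFTraj d Ω1 Ω2}

namespace Regularity

variable (hreg : Regularity S K)
include hreg

theorem abs_D3_le (t : ℝ) (c2 : Ω2) : |D3 S P1 P2 W t c2| ≤ K ^ 3 := by
  have := hreg.prob
  refine abs_integral_le_of_forall_abs_le fun z => ?_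
  calc _ ≤ K * K * K := abs_mul_le_mul_of_abs_le
        (abs_mul_le_mul_of_abs_le (hreg.bdL _ _) (hreg.bdφ3 _)) (hreg.bφ2 _)
    _ = K ^ 3 := by ring

theorem abs_D2H_le (t : ℝ) (z : Vec d × ℝ) (c2 : Ω2) :
    |D2H S P1 P2 W t z c2| ≤ K ^ 3 * |W.w3 t c2| := by
  calc _ ≤ K * K * |W.w3 t c2| * K := abs_mul_le_mul_of_abs_le
        (abs_mul_le_mul_of_abs_le (abs_mul_le_mul_of_abs_le (hreg.bdL _ _) (hreg.bdφ3 _))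
          le_rfl) (hreg.bdφ2 _)
    _ = K ^ 3 * |W.w3 t c2| := by ring

theorem abs_D2_le (t : ℝ) (c1 : Ω1) (c2 : Ω2) :
    |D2 S P1 P2 W t c1 c2| ≤ K ^ 4 * |W.w3 t c2| := by
  have := hreg.prob
  refine abs_integral_le_of_forall_abs_le fun z => ?_
  calc _ ≤ K ^ 3 * |W.w3 t c2| * K := abs_mul_le_mul_of_abs_le (hreg.abs_D2H_le t z c2)
        (hreg.bφ1 _)
    _ = K ^ 4 * |W.w3 t c2| := by ring

end Regularity

namespace IsMFSol

variable (hsol : IsMFSol S P1 P2 W) (hreg : Regularity S K)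
include hsol hreg

theorem abs_w3_le (c2 : Ω2) {t : ℝ} (ht : 0 ≤ t) :
    |W.w3 t c2| ≤ |W.w3 0 c2| + K ^ 4 * t :=
  norm_le_add_mul_of_hasDerivWithinAt_Ici ht (fun s hs => hsol.1 c2 s hs.1) fun s _ => by
    calc ‖-(S.ξ3 s * D3 S P1 P2 W s c2)‖ ≤ K * K ^ 3 := by
          rw [norm_neg]
          exact abs_mul_le_mul_of_abs_le
            ((abs_of_nonneg (hreg.ξ3nonneg s)).trans_le (hreg.bξ3 s)) (hreg.abs_D3_le s c2)
      _ = K ^ 4 := by ring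

theorem abs_w2_le (c1 : Ω1) (c2 : Ω2) {t : ℝ} (ht : 0 ≤ t) :
    |W.w2 t c1 c2| ≤ |W.w2 0 c1 c2| + K ^ 5 * t * (|W.w3 0 c2| + K ^ 4 * t) := by
  have hbound := norm_le_add_mul_of_hasDerivWithinAt_Ici (C := K ^ 5 * (|W.w3 0 c2| + K ^ 4 * t))
    ht (fun s hs => hsol.2.1 c1 c2 s hs.1) fun s hs => by
    have hw3 : |W.w3 s c2| ≤ |W.w3 0 c2| + K ^ 4 * t :=
      (hsol.abs_w3_le hreg c2 hs.1).trans (by gcongr; exact hs.2)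
    calc ‖-(S.ξ2 s * D2 S P1 P2 W s c1 c2)‖ ≤ K * (K ^ 4 * (|W.w3 0 c2| + K ^ 4 * t)) := by
          rw [norm_neg]
          exact abs_mul_le_mul_of_abs_le
            ((abs_of_nonneg (hreg.ξ2nonneg s)).trans_le (hreg.bξ2 s))
            ((hreg.abs_D2_le s c1 c2).trans (by gcongr))
      _ = K ^ 5 * (|W.w3 0 c2| + K ^ 4 * t) := by ring
  simp only [Real.norm_eq_abs] at hbound
  linarith

end IsMFSol

end Bounds

/-- A priori bounds: for some constant `K` depending only on the constant
`K0` of the Regularity assumption, any MF solution `W` whose initialization satisfies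
`|||W|||_0 ≤ M < ∞` obeys, for every `T ≥ 0`,
`ess-sup sup_{t ≤ T} |w3(t, C2)| ≤ M + K T` and
`ess-sup sup_{t ≤ T} |w2(t, C1, C2)| ≤ M + K T (M + K T)`; consequently `|||W|||_T < ∞`. -/
theorem mf_a_priori_bounds :
    ∀ K0 : ℝ, 0 < K0 → ∃ K : ℝ, 0 < K ∧
      ∀ (d : ℕ) (Ω1 : Type u) (Ω2 : Type v)
        [MeasurableSpace Ω1] [MeasurableSpace Ω2]
        (S : MFSetup d), Regularity S K0 →
      ∀ (P1 : Measure Ω1) (P2 : Measure Ω2)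
        [IsProbabilityMeasure P1] [IsProbabilityMeasure P2]
        (W : MFTraj d Ω1 Ω2), IsMFSol S P1 P2 W →
      ∀ M : ℝ, 0 ≤ M →
        (∀ᵐ p ∂(P1.prod P2), |W.w2 0 p.1 p.2| ≤ M) →
        (∀ᵐ c2 ∂P2, |W.w3 0 c2| ≤ M) →
      ∀ T : ℝ, 0 ≤ T →
        (∀ᵐ c2 ∂P2, ∀ t ∈ Set.Icc (0:ℝ) T, |W.w3 t c2| ≤ M + K * T) ∧
        (∀ᵐ p ∂(P1.prod P2), ∀ t ∈ Set.Icc (0:ℝ) T,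
          |W.w2 t p.1 p.2| ≤ M + K * T * (M + K * T)) ∧
        ∃ M' : ℝ,
          (∀ᵐ p ∂(P1.prod P2), ∀ t ∈ Set.Icc (0:ℝ) T, |W.w2 t p.1 p.2| ≤ M') ∧
          (∀ᵐ c2 ∂P2, ∀ t ∈ Set.Icc (0:ℝ) T, |W.w3 t c2| ≤ M') := by
  intro K0 hK0
  obtain ⟨K, hK, hK4, hK5⟩ : ∃ K : ℝ, 0 < K ∧ K0 ^ 4 ≤ K ∧ K0 ^ 5 ≤ K := by
    have h1 : (1 : ℝ) ≤ max K0 1 := le_max_right _ _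
    refine ⟨max K0 1 ^ 5, by positivity, ?_, pow_le_pow_left₀ hK0.le (le_max_left _ _) 5⟩
    calc K0 ^ 4 ≤ max K0 1 ^ 4 := pow_le_pow_left₀ hK0.le (le_max_left _ _) 4
      _ ≤ max K0 1 ^ 5 := pow_le_pow_right₀ h1 (by norm_num)
  refine ⟨K, hK, ?_⟩
  intro d Ω1 Ω2 _ _ S hreg P1 P2 _ _ W hsol M _ h20 h30 T hT
  have hw3 : ∀ c2, |W.w3 0 c2| ≤ M → ∀ t ∈ Set.Icc (0:ℝ) T, |W.w3 t c2| ≤ M + K * T :=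
    fun c2 h0 t ht => (hsol.abs_w3_le hreg c2 ht.1).trans (by gcongr; exacts [ht.1, ht.2])
  have hw2 : ∀ c1 c2, |W.w2 0 c1 c2| ≤ M → |W.w3 0 c2| ≤ M →
      ∀ t ∈ Set.Icc (0:ℝ) T, |W.w2 t c1 c2| ≤ M + K * T * (M + K * T) :=
    fun c1 c2 h0 h0' t ht => (hsol.abs_w2_le hreg c1 c2 ht.1).trans <| by
      have hA : |W.w3 0 c2| + K0 ^ 4 * t ≤ M + K * T := by gcongr; exacts [ht.1, ht.2]
      have hB : K0 ^ 5 * t ≤ K * T := by gcongr; exacts [ht.1, ht.2]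
      gcongr ?_ + ?_
      exact mul_le_mul hB hA (add_nonneg (abs_nonneg _) (mul_nonneg (by positivity) ht.1))
        (mul_nonneg hK.le hT)
  have part1 := h30.mono hw3
  have part2 : ∀ᵐ p ∂(P1.prod P2), ∀ t ∈ Set.Icc (0:ℝ) T,
      |W.w2 t p.1 p.2| ≤ M + K * T * (M + K * T) :=
    (h20.and (Measure.quasiMeasurePreserving_snd.ae h30)).mono fun p hp => hw2 _ _ hp.1 hp.2
  refine ⟨part1, part2, max (M + K * T) (M + K * T * (M + K * T)), ?_, ?_⟩
  · exact part2.mono fun p hp t ht => (hp t ht).trans (le_max_right _ _)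
  · exact part1.mono fun c2 hc2 t ht => (hc2 t ht).trans (le_max_left _ _)

end ThreeLayerMF
end
end

section
/- Under the Regularity assumption, for any T ≥ 0, a,b ≥ 0, and any two MF parameter trajectories W', W'' ∈ 𝒲_T(a,b), there exists a constant K_{a,b} ≥ 1, growing at most polynomially in a and b, such that for 𝒫-almost every data point z = (x,y): (i) ess-sup sup_{t≤T} |Δ2^H(z,C2;W'(t))| ≤ K_{a,b}; (ii) ess-sup sup_{t≤T} |H2(x,C2;W'(t)) − H2(x,C2;W''(t))| ≤ K_{a,b} ‖W'−W''‖_T; (iii) sup_{t≤T} |H3(x;W'(t)) − H3(x;W''(t))| ≤ K_{a,b} ‖W'−W''‖_T; (iv) sup_{t≤T} |∂2L(y,ŷ(x;W'(t))) − ∂2L(y,ŷ(x;W''(t)))| ≤ K_{a,b} ‖W'−W''‖_T; (v) ess-sup sup_{t≤T} |Δ2^H(z,C2;W'(t)) − Δ2^H(z,C2;W''(t))| ≤ K_{a,b} ‖W'−W''‖_T. -/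
open scoped RealInnerProductSpace ENNReal

noncomputable section

namespace ThreeLayerMF
open MeasureTheory
open scoped RealInnerProductSpace

universe u v

section Aux

variable {α β : Type*} [MeasurableSpace α] [MeasurableSpace β]

lemma abs_integral_le' {μ : Measure α} [IsProbabilityMeasure μ] {f : α → ℝ} {C : ℝ}
    (h : ∀ᵐ x ∂μ, |f x| ≤ C) : |∫ x, f x ∂μ| ≤ C := by
  have h2 := norm_integral_le_of_norm_le_const (μ := μ) (f := f) (C := C)
    (by simpa [Real.norm_eq_abs] using h)
  simpa [Real.norm_eq_abs] using h2

lemma integrable_of_bdd' {μ : Measure α} [IsFiniteMeasure μ] {f : α → ℝ} {C : ℝ}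
    (hm : AEStronglyMeasurable f μ) (h : ∀ᵐ x ∂μ, |f x| ≤ C) : Integrable f μ :=
  ⟨hm, HasFiniteIntegral.of_bounded (C := C) (by simpa [Real.norm_eq_abs] using h)⟩

lemma abs_integral_sub_le' {μ : Measure α} [IsProbabilityMeasure μ] {f g : α → ℝ} {C : ℝ}
    (hf : Integrable f μ) (hg : Integrable g μ) (h : ∀ᵐ x ∂μ, |f x - g x| ≤ C) :
    |∫ x, f x ∂μ - ∫ x, g x ∂μ| ≤ C := by
  rw [← integral_sub hf hg]; exact abs_integral_le' h

lemma lip_of_deriv' {f f' : ℝ → ℝ} {K : ℝ} (hd : ∀ x, HasDerivAt f (f' x) x)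
    (hb : ∀ x, |f' x| ≤ K) (u v : ℝ) : |f u - f v| ≤ K * |u - v| := by
  have h2 := Convex.norm_image_sub_le_of_norm_hasDerivWithin_le (s := (Set.univ : Set ℝ))
    (f := f) (f' := f')
    (fun x _ => (hd x).hasDerivWithinAt) (fun x _ => by simpa [Real.norm_eq_abs] using hb x)
    convex_univ (Set.mem_univ v) (Set.mem_univ u)
  simpa [Real.norm_eq_abs] using h2

lemma lip_pt' {f : ℝ → ℝ} {K : ℝ} (hK : 0 ≤ K) (h : LipschitzWith K.toNNReal f) (u v : ℝ) :
    |f u - f v| ≤ K * |u - v| := by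
  have h2 := h.dist_le_mul u v
  rwa [Real.dist_eq, Real.dist_eq, Real.coe_toNNReal K hK] at h2

lemma ae_swap' {μ : Measure α} {ν : Measure β} [SFinite μ] [SFinite ν] {p : α × β → Prop}
    (h : ∀ᵐ q ∂μ.prod ν, p q) : ∀ᵐ q ∂ν.prod μ, p (q.2, q.1) := by
  have ht := Measure.tendsto_ae_map (μ := ν.prod μ) (f := Prod.swap (α := β) (β := α))
    measurable_swap.aemeasurable
  rw [Measure.prod_swap] at ht
  exact ht.eventually h

lemma pow_term_le' {M s : ℝ} (hM : 1 ≤ M) (hs : 1 ≤ s) {k l k' l' : ℕ} (hk : k ≤ k')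
    (hl : l ≤ l') : M ^ k * s ^ l ≤ M ^ k' * s ^ l' :=
  mul_le_mul (pow_le_pow_right₀ hM hk) (pow_le_pow_right₀ hs hl) (by positivity)
    (by positivity)

lemma abs_prod4_sub' {a1 b1 c1 e1 a2 b2 c2 e2 Ka Kb Kc Ke da db dc de : ℝ}
    (hb1 : |b1| ≤ Kb) (hc1 : |c1| ≤ Kc) (he1 : |e1| ≤ Ke)
    (ha2 : |a2| ≤ Ka) (hb2 : |b2| ≤ Kb) (hc2 : |c2| ≤ Kc)
    (hda : |a1 - a2| ≤ da) (hdb : |b1 - b2| ≤ db) (hdc : |c1 - c2| ≤ dc)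
    (hde : |e1 - e2| ≤ de) :
    |a1 * b1 * c1 * e1 - a2 * b2 * c2 * e2| ≤
      da * Kb * Kc * Ke + Ka * db * Kc * Ke + Ka * Kb * dc * Ke + Ka * Kb * Kc * de := by
  have hKa : 0 ≤ Ka := (abs_nonneg _).trans ha2
  have hKb : 0 ≤ Kb := (abs_nonneg _).trans hb1
  have hKc : 0 ≤ Kc := (abs_nonneg _).trans hc1
  have hKe : 0 ≤ Ke := (abs_nonneg _).trans he1
  have hda0 : 0 ≤ da := (abs_nonneg _).trans hda
  have hdb0 : 0 ≤ db := (abs_nonneg _).trans hdb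
  have hdc0 : 0 ≤ dc := (abs_nonneg _).trans hdc
  have h0 : a1 * b1 * c1 * e1 - a2 * b2 * c2 * e2 =
      (a1 - a2) * b1 * c1 * e1 + a2 * (b1 - b2) * c1 * e1 + a2 * b2 * (c1 - c2) * e1 +
        a2 * b2 * c2 * (e1 - e2) := by ring
  rw [h0]
  have t1 : |(a1 - a2) * b1 * c1 * e1| ≤ da * Kb * Kc * Ke := by
    rw [abs_mul, abs_mul, abs_mul]
    exact mul_le_mul (mul_le_mul (mul_le_mul hda hb1 (abs_nonneg _) hda0) hc1 (abs_nonneg _)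
      (by positivity)) he1 (abs_nonneg _) (by positivity)
  have t2 : |a2 * (b1 - b2) * c1 * e1| ≤ Ka * db * Kc * Ke := by
    rw [abs_mul, abs_mul, abs_mul]
    exact mul_le_mul (mul_le_mul (mul_le_mul ha2 hdb (abs_nonneg _) hKa) hc1 (abs_nonneg _)
      (by positivity)) he1 (abs_nonneg _) (by positivity)
  have t3 : |a2 * b2 * (c1 - c2) * e1| ≤ Ka * Kb * dc * Ke := by
    rw [abs_mul, abs_mul, abs_mul]
    exact mul_le_mul (mul_le_mul (mul_le_mul ha2 hb2 (abs_nonneg _) hKa) hdc (abs_nonneg _)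
      (by positivity)) he1 (abs_nonneg _) (by positivity)
  have t4 : |a2 * b2 * c2 * (e1 - e2)| ≤ Ka * Kb * Kc * de := by
    rw [abs_mul, abs_mul, abs_mul]
    exact mul_le_mul (mul_le_mul (mul_le_mul ha2 hb2 (abs_nonneg _) hKa) hc2 (abs_nonneg _)
      (by positivity)) hde (abs_nonneg _) (by positivity)
  calc |(a1 - a2) * b1 * c1 * e1 + a2 * (b1 - b2) * c1 * e1 + a2 * b2 * (c1 - c2) * e1 +
        a2 * b2 * c2 * (e1 - e2)|
      ≤ |(a1 - a2) * b1 * c1 * e1 + a2 * (b1 - b2) * c1 * e1 + a2 * b2 * (c1 - c2) * e1| +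
        |a2 * b2 * c2 * (e1 - e2)| := abs_add_le _ _
    _ ≤ |(a1 - a2) * b1 * c1 * e1| + |a2 * (b1 - b2) * c1 * e1| + |a2 * b2 * (c1 - c2) * e1| +
        |a2 * b2 * c2 * (e1 - e2)| := by
          have h3 := abs_add_three ((a1 - a2) * b1 * c1 * e1) (a2 * (b1 - b2) * c1 * e1)
            (a2 * b2 * (c1 - c2) * e1)
          linarith
    _ ≤ _ := by linarith

end Aux

/-- Lipschitz estimates for `Δ2^H`, `H2`, `H3` and `∂2 L ∘ ŷ` on the space
`𝒲_T(a, b)`, with a constant `K_{a,b} = C (1 + a + b)^p ≥ 1` growing polynomially in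
`a, b` and depending only on the Regularity constant `K0`.  Here `D` is any essential
bound for the distance `‖W' − W''‖_T`. -/
theorem mf_lipschitz_estimates :
    ∀ K0 : ℝ, 0 < K0 → ∃ (C : ℝ) (p : ℕ), 0 < C ∧
      ∀ (d : ℕ) (Ω1 : Type u) (Ω2 : Type v)
        [MeasurableSpace Ω1] [MeasurableSpace Ω2]
        (S : MFSetup d), Regularity S K0 →
      ∀ (P1 : Measure Ω1) (P2 : Measure Ω2)
        [IsProbabilityMeasure P1] [IsProbabilityMeasure P2]
        (T a b : ℝ), 0 ≤ T → 0 ≤ a → 0 ≤ b →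
      1 ≤ C * (1 + a + b) ^ p ∧
      ∀ (W' W'' : MFTraj d Ω1 Ω2),
        (∀ᵐ q ∂(P1.prod P2), ∀ t ∈ Set.Icc (0:ℝ) T, |W'.w2 t q.1 q.2| ≤ a) →
        (∀ᵐ c2 ∂P2, ∀ t ∈ Set.Icc (0:ℝ) T, |W'.w3 t c2| ≤ b) →
        (∀ᵐ q ∂(P1.prod P2), ∀ t ∈ Set.Icc (0:ℝ) T, |W''.w2 t q.1 q.2| ≤ a) →
        (∀ᵐ c2 ∂P2, ∀ t ∈ Set.Icc (0:ℝ) T, |W''.w3 t c2| ≤ b) →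
        ∀ D : ℝ, 0 ≤ D →
        (∀ᵐ q ∂(P1.prod P2), ∀ t ∈ Set.Icc (0:ℝ) T,
          ‖W'.w1 t q.1 - W''.w1 t q.1‖ ≤ D ∧
          |W'.w2 t q.1 q.2 - W''.w2 t q.1 q.2| ≤ D ∧
          |W'.w3 t q.2 - W''.w3 t q.2| ≤ D) →
        ∀ᵐ z ∂S.P,
          (∀ᵐ c2 ∂P2, ∀ t ∈ Set.Icc (0:ℝ) T,
            |D2H S P1 P2 W' t z c2| ≤ C * (1 + a + b) ^ p) ∧
          (∀ᵐ c2 ∂P2, ∀ t ∈ Set.Icc (0:ℝ) T,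
            |H2 S P1 W' t z.1 c2 - H2 S P1 W'' t z.1 c2| ≤ C * (1 + a + b) ^ p * D) ∧
          (∀ t ∈ Set.Icc (0:ℝ) T,
            |H3 S P1 P2 W' t z.1 - H3 S P1 P2 W'' t z.1| ≤ C * (1 + a + b) ^ p * D) ∧
          (∀ t ∈ Set.Icc (0:ℝ) T,
            |S.dL z.2 (yhat S P1 P2 W' t z.1) - S.dL z.2 (yhat S P1 P2 W'' t z.1)| ≤
              C * (1 + a + b) ^ p * D) ∧
          (∀ᵐ c2 ∂P2, ∀ t ∈ Set.Icc (0:ℝ) T,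
            |D2H S P1 P2 W' t z c2 - D2H S P1 P2 W'' t z c2| ≤ C * (1 + a + b) ^ p * D) := by
  intro K0 hK0
  refine ⟨(K0 + 4) ^ 10, 3, by positivity, ?_⟩
  intro d Ω1 Ω2 _ _ S R P1 P2 _ _ T a b hT ha hb
  have hK0nn : (0:ℝ) ≤ K0 := hK0.le
  have hM4 : (4:ℝ) ≤ K0 + 4 := by linarith
  have hM1 : (1:ℝ) ≤ K0 + 4 := by linarith
  have hK0M : K0 ≤ K0 + 4 := by linarith
  have hs1 : (1:ℝ) ≤ 1 + a + b := by linarith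
  have haS : a ≤ 1 + a + b := by linarith
  have hbS : b ≤ 1 + a + b := by linarith
  set M : ℝ := K0 + 4 with hMdef
  set s : ℝ := 1 + a + b with hsdef
  have hM0 : (0:ℝ) ≤ M := by linarith
  have hs0 : (0:ℝ) ≤ s := by linarith
  -- basic power comparisons
  have hE1 : (1:ℝ) ≤ M ^ 10 * s ^ 3 := by
    have := pow_term_le' hM1 hs1 (k := 0) (l := 0) (k' := 10) (l' := 3) (by norm_num)
      (by norm_num)
    simpa using this
  refine ⟨hE1, ?_⟩
  -- coefficient inequalities
  have twoM : ∀ X : ℝ, 0 ≤ X → 2 * X ≤ M * X := fun X hX =>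
    mul_le_mul_of_nonneg_right (by linarith) hX
  have fourM : ∀ X : ℝ, 0 ≤ X → 4 * X ≤ M * X := fun X hX =>
    mul_le_mul_of_nonneg_right (by linarith) hX
  have cH2 : K0 + K0 ^ 2 * a ≤ M ^ 3 * s := by
    have e1 : K0 ≤ M ^ 2 * s := by
      have h2 : M ^ 1 * s ^ 0 ≤ M ^ 2 * s ^ 1 := pow_term_le' hM1 hs1 (by norm_num) (by norm_num)
      simp only [pow_one, pow_zero, mul_one] at h2
      linarith
    have e2 : K0 ^ 2 * a ≤ M ^ 2 * s := by
      have := mul_le_mul (pow_le_pow_left₀ hK0nn hK0M 2) haS ha (by positivity)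
      simpa using this
    have e3 : 2 * (M ^ 2 * s) ≤ M * (M ^ 2 * s) := twoM _ (by positivity)
    have e4 : M * (M ^ 2 * s) = M ^ 3 * s := by ring
    linarith
  have cH3 : K0 + K0 * (M ^ 3 * s) * b ≤ M ^ 5 * s ^ 2 := by
    have e1 : K0 ≤ M ^ 4 * s ^ 2 := by
      have h2 : M ^ 1 * s ^ 0 ≤ M ^ 4 * s ^ 2 := pow_term_le' hM1 hs1 (by norm_num) (by norm_num)
      simp only [pow_one, pow_zero, mul_one] at h2
      linarith
    have e2 : K0 * (M ^ 3 * s) * b ≤ M * (M ^ 3 * s) * s :=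
      mul_le_mul (mul_le_mul_of_nonneg_right hK0M (by positivity)) hbS hb (by positivity)
    have e2' : M * (M ^ 3 * s) * s = M ^ 4 * s ^ 2 := by ring
    have e3 : 2 * (M ^ 4 * s ^ 2) ≤ M * (M ^ 4 * s ^ 2) := twoM _ (by positivity)
    have e4 : M * (M ^ 4 * s ^ 2) = M ^ 5 * s ^ 2 := by ring
    linarith
  have cdL : K0 * (K0 * (M ^ 5 * s ^ 2)) ≤ M ^ 7 * s ^ 2 := by
    have e1 : K0 * (K0 * (M ^ 5 * s ^ 2)) ≤ M * (M * (M ^ 5 * s ^ 2)) :=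
      mul_le_mul hK0M (mul_le_mul_of_nonneg_right hK0M (by positivity))
        (by positivity) hM0
    have e2 : M * (M * (M ^ 5 * s ^ 2)) = M ^ 7 * s ^ 2 := by ring
    linarith
  have cB : K0 * K0 * b * K0 ≤ M ^ 10 * s ^ 3 := by
    have e1 : K0 * K0 * b * K0 ≤ M * M * s * M :=
      mul_le_mul (mul_le_mul (mul_le_mul hK0M hK0M hK0nn hM0) hbS hb (by positivity))
        hK0M hK0nn (by positivity)
    have e2 : M * M * s * M = M ^ 3 * s := by ring
    have e3 : M ^ 3 * s ^ 1 ≤ M ^ 10 * s ^ 3 := pow_term_le' hM1 hs1 (by norm_num) (by norm_num)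
    simp only [pow_one] at e3
    linarith
  have cD2H : M ^ 7 * s ^ 2 * K0 * b * K0 + K0 * (K0 * (M ^ 5 * s ^ 2)) * b * K0 +
      K0 * K0 * K0 + K0 * K0 * b * (K0 * (M ^ 3 * s)) ≤ M ^ 10 * s ^ 3 := by
    have t1 : M ^ 7 * s ^ 2 * K0 * b * K0 ≤ M ^ 9 * s ^ 3 := by
      have e : M ^ 7 * s ^ 2 * K0 * b * K0 ≤ M ^ 7 * s ^ 2 * M * s * M :=
        mul_le_mul (mul_le_mul (mul_le_mul_of_nonneg_left hK0M (by positivity)) hbS hb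
          (by positivity)) hK0M hK0nn (by positivity)
      have e2 : M ^ 7 * s ^ 2 * M * s * M = M ^ 9 * s ^ 3 := by ring
      linarith
    have t2 : K0 * (K0 * (M ^ 5 * s ^ 2)) * b * K0 ≤ M ^ 9 * s ^ 3 := by
      have e : K0 * (K0 * (M ^ 5 * s ^ 2)) * b * K0 ≤ M * (M * (M ^ 5 * s ^ 2)) * s * M := by
        refine mul_le_mul (mul_le_mul ?_ hbS hb ?_) hK0M hK0nn ?_
        · exact mul_le_mul hK0M (mul_le_mul_of_nonneg_right hK0M (by positivity))
            (by positivity) hM0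
        · positivity
        · positivity
      have e2 : M * (M * (M ^ 5 * s ^ 2)) * s * M = M ^ 8 * s ^ 3 := by ring
      have e3 : M ^ 8 * s ^ 3 ≤ M ^ 9 * s ^ 3 := pow_term_le' hM1 hs1 (by norm_num) le_rfl
      linarith
    have t3 : K0 * K0 * K0 ≤ M ^ 9 * s ^ 3 := by
      have e : K0 * K0 * K0 ≤ M * M * M :=
        mul_le_mul (mul_le_mul hK0M hK0M hK0nn hM0) hK0M hK0nn (by positivity)
      have e2 : M * M * M = M ^ 3 * s ^ 0 * 1 := by ring
      have e3 : M ^ 3 * s ^ 0 ≤ M ^ 9 * s ^ 3 := pow_term_le' hM1 hs1 (by norm_num) (by norm_num)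
      linarith
    have t4 : K0 * K0 * b * (K0 * (M ^ 3 * s)) ≤ M ^ 9 * s ^ 3 := by
      have e : K0 * K0 * b * (K0 * (M ^ 3 * s)) ≤ M * M * s * (M * (M ^ 3 * s)) := by
        refine mul_le_mul (mul_le_mul (mul_le_mul hK0M hK0M hK0nn hM0) hbS hb (by positivity))
          (mul_le_mul_of_nonneg_right hK0M (by positivity)) (by positivity) (by positivity)
      have e2 : M * M * s * (M * (M ^ 3 * s)) = M ^ 6 * s ^ 2 := by ring
      have e3 : M ^ 6 * s ^ 2 ≤ M ^ 9 * s ^ 3 := pow_term_le' hM1 hs1 (by norm_num) (by norm_num)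
      linarith
    have e4 : 4 * (M ^ 9 * s ^ 3) ≤ M * (M ^ 9 * s ^ 3) := fourM _ (by positivity)
    have e5 : M * (M ^ 9 * s ^ 3) = M ^ 10 * s ^ 3 := by ring
    linarith
  -- regularity consequences
  have contφ1 : Continuous S.φ1 := by
    rw [continuous_iff_continuousAt]; exact fun x => (R.hdφ1 x).continuousAt
  have contφ2 : Continuous S.φ2 := by
    rw [continuous_iff_continuousAt]; exact fun x => (R.hdφ2 x).continuousAt
  have lipφ1 := lip_of_deriv' R.hdφ1 R.bdφ1
  have lipφ2 := lip_of_deriv' R.hdφ2 R.bdφ2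
  have lipφ3 := lip_of_deriv' R.hdφ3 R.bdφ3
  have lipdφ2 := lip_pt' hK0nn R.lipdφ2
  have lipdφ3 := lip_pt' hK0nn R.lipdφ3
  have lipdL : ∀ y u v, |S.dL y u - S.dL y v| ≤ K0 * |u - v| := fun y =>
    lip_pt' hK0nn (R.lipdL y)
  -- measurability helpers
  have measf : ∀ (W : MFTraj d Ω1 Ω2) (t : ℝ) (x : Vec d) (c2 : Ω2),
      Measurable fun c1 => W.w2 t c1 c2 * S.φ1 ⟪W.w1 t c1, x⟫ := by
    intro W t x c2
    exact ((W.meas2 t).comp (measurable_id.prodMk measurable_const)).mul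
      (contφ1.measurable.comp
        ((continuous_id.inner continuous_const).measurable.comp (W.meas1 t)))
  have measH2 : ∀ (W : MFTraj d Ω1 Ω2) (t : ℝ) (x : Vec d),
      Measurable fun c2 => H2 S P1 W t x c2 := by
    intro W t x
    have hF : StronglyMeasurable fun q : Ω1 × Ω2 => W.w2 t q.1 q.2 * S.φ1 ⟪W.w1 t q.1, x⟫ :=
      Measurable.stronglyMeasurable <| (W.meas2 t).mul
        (contφ1.measurable.comp
          ((continuous_id.inner continuous_const).measurable.comp
            ((W.meas1 t).comp measurable_fst)))
    exact hF.integral_prod_left'.measurable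
  intro W' W'' hw2' hw3' hw2'' hw3'' D hD0 hdist
  -- a.e. rearrangements
  have h2's : ∀ᵐ c2 ∂P2, ∀ᵐ c1 ∂P1, ∀ t ∈ Set.Icc (0:ℝ) T, |W'.w2 t c1 c2| ≤ a :=
    Measure.ae_ae_of_ae_prod (ae_swap' hw2')
  have h2''s : ∀ᵐ c2 ∂P2, ∀ᵐ c1 ∂P1, ∀ t ∈ Set.Icc (0:ℝ) T, |W''.w2 t c1 c2| ≤ a :=
    Measure.ae_ae_of_ae_prod (ae_swap' hw2'')
  have hdists : ∀ᵐ c2 ∂P2, ∀ᵐ c1 ∂P1, ∀ t ∈ Set.Icc (0:ℝ) T,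
      ‖W'.w1 t c1 - W''.w1 t c1‖ ≤ D ∧ |W'.w2 t c1 c2 - W''.w2 t c1 c2| ≤ D ∧
      |W'.w3 t c2 - W''.w3 t c2| ≤ D :=
    Measure.ae_ae_of_ae_prod (ae_swap' hdist)
  have hw3D : ∀ᵐ c2 ∂P2, ∀ t ∈ Set.Icc (0:ℝ) T, |W'.w3 t c2 - W''.w3 t c2| ≤ D := by
    filter_upwards [hdists] with c2 h
    obtain ⟨c1, hc1⟩ := h.exists
    exact fun t ht => (hc1 t ht).2.2
  filter_upwards [R.bX] with z hz
  -- the H2 difference bound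
  have hH2d : ∀ᵐ c2 ∂P2, ∀ t ∈ Set.Icc (0:ℝ) T,
      |H2 S P1 W' t z.1 c2 - H2 S P1 W'' t z.1 c2| ≤ M ^ 3 * s * D := by
    filter_upwards [h2's, h2''s, hdists] with c2 ha' ha'' hd
    intro t ht
    simp only [H2]
    refine abs_integral_sub_le' ?_ ?_ ?_
    · refine integrable_of_bdd' (C := a * K0) (measf W' t z.1 c2).aestronglyMeasurable ?_
      filter_upwards [ha'] with c1 h1
      rw [abs_mul]
      exact mul_le_mul (h1 t ht) (R.bφ1 _) (abs_nonneg _) ha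
    · refine integrable_of_bdd' (C := a * K0) (measf W'' t z.1 c2).aestronglyMeasurable ?_
      filter_upwards [ha''] with c1 h1
      rw [abs_mul]
      exact mul_le_mul (h1 t ht) (R.bφ1 _) (abs_nonneg _) ha
    · filter_upwards [ha'', hd] with c1 h2 hdc1
      have e1 : |W'.w2 t c1 c2 - W''.w2 t c1 c2| ≤ D := (hdc1 t ht).2.1
      have e2 : ‖W'.w1 t c1 - W''.w1 t c1‖ ≤ D := (hdc1 t ht).1
      have e3 : |⟪W'.w1 t c1, z.1⟫ - ⟪W''.w1 t c1, z.1⟫| ≤ K0 * D := by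
        rw [← inner_sub_left]
        calc |⟪W'.w1 t c1 - W''.w1 t c1, z.1⟫|
            ≤ ‖W'.w1 t c1 - W''.w1 t c1‖ * ‖z.1‖ := abs_real_inner_le_norm _ _
          _ ≤ D * K0 := mul_le_mul e2 hz (norm_nonneg _) hD0
          _ = K0 * D := mul_comm _ _
      have e4 : |S.φ1 ⟪W'.w1 t c1, z.1⟫ - S.φ1 ⟪W''.w1 t c1, z.1⟫| ≤ K0 * (K0 * D) :=
        (lipφ1 _ _).trans (mul_le_mul_of_nonneg_left e3 hK0nn)
      have hsplit : W'.w2 t c1 c2 * S.φ1 ⟪W'.w1 t c1, z.1⟫ -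
          W''.w2 t c1 c2 * S.φ1 ⟪W''.w1 t c1, z.1⟫ =
          (W'.w2 t c1 c2 - W''.w2 t c1 c2) * S.φ1 ⟪W'.w1 t c1, z.1⟫ +
            W''.w2 t c1 c2 * (S.φ1 ⟪W'.w1 t c1, z.1⟫ - S.φ1 ⟪W''.w1 t c1, z.1⟫) := by ring
      rw [hsplit]
      have e5 : |(W'.w2 t c1 c2 - W''.w2 t c1 c2) * S.φ1 ⟪W'.w1 t c1, z.1⟫| ≤ D * K0 := by
        rw [abs_mul]; exact mul_le_mul e1 (R.bφ1 _) (abs_nonneg _) hD0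
      have e6 : |W''.w2 t c1 c2 *
          (S.φ1 ⟪W'.w1 t c1, z.1⟫ - S.φ1 ⟪W''.w1 t c1, z.1⟫)| ≤ a * (K0 * (K0 * D)) := by
        rw [abs_mul]; exact mul_le_mul (h2 t ht) e4 (abs_nonneg _) ha
      have e7 := abs_add_le ((W'.w2 t c1 c2 - W''.w2 t c1 c2) * S.φ1 ⟪W'.w1 t c1, z.1⟫)
        (W''.w2 t c1 c2 * (S.φ1 ⟪W'.w1 t c1, z.1⟫ - S.φ1 ⟪W''.w1 t c1, z.1⟫))
      have e8 : (K0 + K0 ^ 2 * a) * D ≤ M ^ 3 * s * D := mul_le_mul_of_nonneg_right cH2 hD0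
      have e9 : D * K0 + a * (K0 * (K0 * D)) = (K0 + K0 ^ 2 * a) * D := by ring
      linarith
  -- the H3 difference bound
  have hH3d : ∀ t ∈ Set.Icc (0:ℝ) T,
      |H3 S P1 P2 W' t z.1 - H3 S P1 P2 W'' t z.1| ≤ M ^ 5 * s ^ 2 * D := by
    intro t ht
    simp only [H3]
    refine abs_integral_sub_le' ?_ ?_ ?_
    · refine integrable_of_bdd' (C := b * K0)
        (((W'.meas3 t).mul (contφ2.measurable.comp (measH2 W' t z.1))).aestronglyMeasurable) ?_
      filter_upwards [hw3'] with c2 h1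
      rw [abs_mul]
      exact mul_le_mul (h1 t ht) (R.bφ2 _) (abs_nonneg _) hb
    · refine integrable_of_bdd' (C := b * K0)
        (((W''.meas3 t).mul (contφ2.measurable.comp (measH2 W'' t z.1))).aestronglyMeasurable) ?_
      filter_upwards [hw3''] with c2 h1
      rw [abs_mul]
      exact mul_le_mul (h1 t ht) (R.bφ2 _) (abs_nonneg _) hb
    · filter_upwards [hw3'', hw3D, hH2d] with c2 h2 hDc2 hH2c2
      have e1 : |W'.w3 t c2 - W''.w3 t c2| ≤ D := hDc2 t ht
      have e4 : |S.φ2 (H2 S P1 W' t z.1 c2) - S.φ2 (H2 S P1 W'' t z.1 c2)| ≤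
          K0 * (M ^ 3 * s * D) :=
        (lipφ2 _ _).trans (mul_le_mul_of_nonneg_left (hH2c2 t ht) hK0nn)
      have hsplit : W'.w3 t c2 * S.φ2 (H2 S P1 W' t z.1 c2) -
          W''.w3 t c2 * S.φ2 (H2 S P1 W'' t z.1 c2) =
          (W'.w3 t c2 - W''.w3 t c2) * S.φ2 (H2 S P1 W' t z.1 c2) +
            W''.w3 t c2 * (S.φ2 (H2 S P1 W' t z.1 c2) - S.φ2 (H2 S P1 W'' t z.1 c2)) := by ring
      rw [hsplit]
      have e5 : |(W'.w3 t c2 - W''.w3 t c2) * S.φ2 (H2 S P1 W' t z.1 c2)| ≤ D * K0 := by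
        rw [abs_mul]; exact mul_le_mul e1 (R.bφ2 _) (abs_nonneg _) hD0
      have e6 : |W''.w3 t c2 *
          (S.φ2 (H2 S P1 W' t z.1 c2) - S.φ2 (H2 S P1 W'' t z.1 c2))| ≤
          b * (K0 * (M ^ 3 * s * D)) := by
        rw [abs_mul]; exact mul_le_mul (h2 t ht) e4 (abs_nonneg _) hb
      have e7 := abs_add_le ((W'.w3 t c2 - W''.w3 t c2) * S.φ2 (H2 S P1 W' t z.1 c2))
        (W''.w3 t c2 * (S.φ2 (H2 S P1 W' t z.1 c2) - S.φ2 (H2 S P1 W'' t z.1 c2)))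
      have e8 : (K0 + K0 * (M ^ 3 * s) * b) * D ≤ M ^ 5 * s ^ 2 * D :=
        mul_le_mul_of_nonneg_right cH3 hD0
      have e9 : D * K0 + b * (K0 * (M ^ 3 * s * D)) = (K0 + K0 * (M ^ 3 * s) * b) * D := by ring
      linarith
  -- the dL difference bound
  have hdLd : ∀ t ∈ Set.Icc (0:ℝ) T,
      |S.dL z.2 (yhat S P1 P2 W' t z.1) - S.dL z.2 (yhat S P1 P2 W'' t z.1)| ≤
        M ^ 7 * s ^ 2 * D := by
    intro t ht
    have e1 : |S.dL z.2 (yhat S P1 P2 W' t z.1) - S.dL z.2 (yhat S P1 P2 W'' t z.1)| ≤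
        K0 * |yhat S P1 P2 W' t z.1 - yhat S P1 P2 W'' t z.1| := lipdL _ _ _
    have e2 : |yhat S P1 P2 W' t z.1 - yhat S P1 P2 W'' t z.1| ≤
        K0 * (M ^ 5 * s ^ 2 * D) :=
      (lipφ3 _ _).trans (mul_le_mul_of_nonneg_left (hH3d t ht) hK0nn)
    have e3 : K0 * (K0 * (M ^ 5 * s ^ 2)) * D ≤ M ^ 7 * s ^ 2 * D :=
      mul_le_mul_of_nonneg_right cdL hD0
    have e2' := mul_le_mul_of_nonneg_left e2 hK0nn
    have e4 : K0 * (K0 * (M ^ 5 * s ^ 2 * D)) = K0 * (K0 * (M ^ 5 * s ^ 2)) * D := by ring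
    linarith
  -- final weakening constants
  have cW2 : M ^ 3 * s ≤ M ^ 10 * s ^ 3 := by
    have := pow_term_le' hM1 hs1 (k := 3) (l := 1) (k' := 10) (l' := 3) (by norm_num)
      (by norm_num)
    simpa using this
  have cW3 : M ^ 5 * s ^ 2 ≤ M ^ 10 * s ^ 3 :=
    pow_term_le' hM1 hs1 (by norm_num) (by norm_num)
  have cW4 : M ^ 7 * s ^ 2 ≤ M ^ 10 * s ^ 3 :=
    pow_term_le' hM1 hs1 (by norm_num) (by norm_num)
  refine ⟨?_, ?_, ?_, ?_, ?_⟩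
  · -- (i) boundedness of D2H
    filter_upwards [hw3'] with c2 h3'
    intro t ht
    simp only [D2H]
    calc |S.dL z.2 (yhat S P1 P2 W' t z.1) * S.dφ3 (H3 S P1 P2 W' t z.1) * W'.w3 t c2 *
          S.dφ2 (H2 S P1 W' t z.1 c2)|
        = |S.dL z.2 (yhat S P1 P2 W' t z.1)| * |S.dφ3 (H3 S P1 P2 W' t z.1)| * |W'.w3 t c2| *
          |S.dφ2 (H2 S P1 W' t z.1 c2)| := by rw [abs_mul, abs_mul, abs_mul]
      _ ≤ K0 * K0 * b * K0 := by
          refine mul_le_mul (mul_le_mul (mul_le_mul (R.bdL _ _) (R.bdφ3 _) (abs_nonneg _) hK0nn)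
            (h3' t ht) (abs_nonneg _) ?_) (R.bdφ2 _) (abs_nonneg _) ?_ <;> positivity
      _ ≤ M ^ 10 * s ^ 3 := cB
  · -- (ii) H2 Lipschitz
    filter_upwards [hH2d] with c2 hc2
    intro t ht
    exact (hc2 t ht).trans (mul_le_mul_of_nonneg_right cW2 hD0)
  · -- (iii) H3 Lipschitz
    intro t ht
    exact (hH3d t ht).trans (mul_le_mul_of_nonneg_right cW3 hD0)
  · -- (iv) dL Lipschitz
    intro t ht
    exact (hdLd t ht).trans (mul_le_mul_of_nonneg_right cW4 hD0)
  · -- (v) D2H Lipschitz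
    filter_upwards [hw3', hw3'', hw3D, hH2d] with c2 h3' h3'' hDc2 hH2c2
    intro t ht
    simp only [D2H]
    have hdb : |S.dφ3 (H3 S P1 P2 W' t z.1) - S.dφ3 (H3 S P1 P2 W'' t z.1)| ≤
        K0 * (M ^ 5 * s ^ 2 * D) :=
      (lipdφ3 _ _).trans (mul_le_mul_of_nonneg_left (hH3d t ht) hK0nn)
    have hde : |S.dφ2 (H2 S P1 W' t z.1 c2) - S.dφ2 (H2 S P1 W'' t z.1 c2)| ≤
        K0 * (M ^ 3 * s * D) :=
      (lipdφ2 _ _).trans (mul_le_mul_of_nonneg_left (hH2c2 t ht) hK0nn)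
    have key := abs_prod4_sub' (Ka := K0) (Kb := K0) (Kc := b) (Ke := K0)
      (R.bdφ3 _) (h3' t ht) (R.bdφ2 _) (R.bdL _ _) (R.bdφ3 _) (h3'' t ht)
      (hdLd t ht) hdb (hDc2 t ht) hde
    have efin : M ^ 7 * s ^ 2 * D * K0 * b * K0 + K0 * (K0 * (M ^ 5 * s ^ 2 * D)) * b * K0 +
        K0 * K0 * D * K0 + K0 * K0 * b * (K0 * (M ^ 3 * s * D)) ≤ M ^ 10 * s ^ 3 * D := by
      have e1 := mul_le_mul_of_nonneg_right cD2H hD0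
      have e2 : M ^ 7 * s ^ 2 * D * K0 * b * K0 + K0 * (K0 * (M ^ 5 * s ^ 2 * D)) * b * K0 +
          K0 * K0 * D * K0 + K0 * K0 * b * (K0 * (M ^ 3 * s * D)) =
          (M ^ 7 * s ^ 2 * K0 * b * K0 + K0 * (K0 * (M ^ 5 * s ^ 2)) * b * K0 +
            K0 * K0 * K0 + K0 * K0 * b * (K0 * (M ^ 3 * s))) * D := by ring
      linarith
    exact key.trans efin

end ThreeLayerMF
end
end

section
/- Let X_1, ..., X_n be i.i.d. random variables taking values in a separable Hilbert space, and suppose there exists R > 0 such that |X_i − E[X_i]| ≤ R almost surely. Then for any δ > 0: P( (1/n) | Σ_{i=1}^n (X_i − E[X_i]) | ≥ δ ) ≤ 2 exp(−nδ²/(2R²)). -/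
/-!
Pinelis' argument. Since `‖x + y‖² = ‖x‖² + 2⟪x, y⟫ + ‖y‖²` and `u ↦ cosh √u` is convex on
`[0, ∞)`, for `‖y‖ ≤ R` the value `cosh ‖x + y‖` lies below the chord through the extreme cases
`⟪x, y⟫ = ±‖x‖R`, which is an affine function of `y`. Averaging over a mean-zero `Y` gives
`E cosh ‖x + Y‖ ≤ cosh ‖x‖ cosh R`; applied to the independent increments of the partial sums this
yields `E cosh (λ‖∑ᵢ Yᵢ‖) ≤ cosh (λR)ⁿ ≤ exp (nλ²R²/2)`, and Markov's inequality with `λ = δ/R²`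
gives the tail bound.
-/

open MeasureTheory ProbabilityTheory Finset Real
open scoped InnerProductSpace

namespace Real

lemma cosh_le_cosh_of_nonneg {x y : ℝ} (hx : 0 ≤ x) (hxy : x ≤ y) : cosh x ≤ cosh y :=
  cosh_strictMonoOn.monotoneOn hx (hx.trans hxy) hxy

lemma sinh_div_self_le_sinh_div_self {x y : ℝ} (hx : 0 < x) (hxy : x ≤ y) :
    sinh x / x ≤ sinh y / y := by
  have hy : 0 < y := hx.trans_le hxy
  rw [div_le_div_iff₀ hx hy]
  refine hasSum_le (fun k => ?_) (x.hasSum_sinh.mul_right y) (y.hasSum_sinh.mul_right x)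
  rw [div_mul_eq_mul_div, div_mul_eq_mul_div]
  gcongr ?_ / _
  calc x ^ (2 * k + 1) * y = x ^ (2 * k) * (x * y) := by ring
    _ ≤ y ^ (2 * k) * (x * y) := by gcongr
    _ = y ^ (2 * k + 1) * x := by ring

lemma convexOn_cosh_sqrt : ConvexOn ℝ (Set.Ici 0) fun u => cosh √u := by
  have hderiv : ∀ u : ℝ, 0 < u → HasDerivAt (fun u => cosh √u) (sinh √u / √u / 2) u := by
    intro u hu
    exact ((hasDerivAt_cosh √u).comp u (hasDerivAt_sqrt hu.ne')).congr_deriv (by ring)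
  refine MonotoneOn.convexOn_of_deriv (convex_Ici 0) (by fun_prop) ?_ ?_ <;> rw [interior_Ici]
  · exact fun u hu => (hderiv u hu).differentiableAt.differentiableWithinAt
  · intro a ha b hb hab
    rw [(hderiv a ha).deriv, (hderiv b hb).deriv]
    gcongr ?_ / _
    exact sinh_div_self_le_sinh_div_self (sqrt_pos.2 ha) (sqrt_le_sqrt hab)

/-- The right-hand side is the chord of `c ↦ cosh √(s² + 2c + r²)` through `c = ±sr`, where the
function equals `cosh (s ± r)`. -/
lemma cosh_sqrt_le_of_abs_le {s r c : ℝ} (hs : 0 ≤ s) (hr : 0 ≤ r) (hc : |c| ≤ s * r) :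
    cosh √(s ^ 2 + 2 * c + r ^ 2) ≤ cosh s * cosh r + c * (sinh s * sinh r / (s * r)) := by
  rcases hs.eq_or_lt with rfl | hs0
  · obtain rfl : c = 0 := by simpa using hc
    simp [sqrt_sq hr]
  rcases hr.eq_or_lt with rfl | hr0
  · obtain rfl : c = 0 := by simpa using hc
    simp [sqrt_sq hs]
  set a := (s * r - c) / (2 * s * r)
  set b := (s * r + c) / (2 * s * r)
  have ha : 0 ≤ a := div_nonneg (by linarith [le_abs_self c]) (by positivity)
  have hb : 0 ≤ b := div_nonneg (by linarith [neg_abs_le c]) (by positivity)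
  have hab : a + b = 1 := by simp only [a, b]; field_simp; ring
  have hchord := convexOn_cosh_sqrt.2 (sq_nonneg (s - r)) (sq_nonneg (s + r)) ha hb hab
  have hmid : a • (s - r) ^ 2 + b • (s + r) ^ 2 = s ^ 2 + 2 * c + r ^ 2 := by
    simp only [smul_eq_mul, a, b]; field_simp; ring
  dsimp only at hchord
  rw [hmid, smul_eq_mul, smul_eq_mul, sqrt_sq_eq_abs, sqrt_sq_eq_abs, cosh_abs, cosh_abs]
    at hchord
  refine hchord.trans_eq ?_
  rw [cosh_sub, cosh_add]
  simp only [a, b]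
  field_simp
  ring

end Real

section Hilbert

variable {F : Type*} [NormedAddCommGroup F] [InnerProductSpace ℝ F]

lemma cosh_norm_add_le (x : F) {y : F} {R : ℝ} (hR : 0 ≤ R) (hy : ‖y‖ ≤ R) :
    cosh ‖x + y‖ ≤ cosh ‖x‖ * cosh R + ⟪x, y⟫_ℝ * (sinh ‖x‖ * sinh R / (‖x‖ * R)) := by
  have hnorm : ‖x + y‖ ≤ √(‖x‖ ^ 2 + 2 * ⟪x, y⟫_ℝ + R ^ 2) := by
    rw [← sqrt_sq (norm_nonneg (x + y)), norm_add_sq_real]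
    gcongr
  calc cosh ‖x + y‖ ≤ cosh √(‖x‖ ^ 2 + 2 * ⟪x, y⟫_ℝ + R ^ 2) :=
        cosh_le_cosh_of_nonneg (norm_nonneg _) hnorm
    _ ≤ _ := cosh_sqrt_le_of_abs_le (norm_nonneg x) hR
        ((abs_real_inner_le_norm x y).trans (by gcongr))

end Hilbert

section Integrals

variable {Θ : Type*} [MeasurableSpace Θ] {μ : Measure Θ}

lemma integrable_cosh_norm_of_ae_norm_le {E : Type*} [NormedAddCommGroup E] [IsFiniteMeasure μ]
    {f : Θ → E} (hf : AEStronglyMeasurable f μ) {C : ℝ} (hC : ∀ᵐ θ ∂μ, ‖f θ‖ ≤ C) :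
    Integrable (fun θ => cosh ‖f θ‖) μ := by
  refine .of_bound (continuous_cosh.comp_aestronglyMeasurable hf.norm) (cosh C) ?_
  filter_upwards [hC] with θ hθ
  rw [norm_of_nonneg (cosh_pos _).le]
  exact cosh_le_cosh_of_nonneg (norm_nonneg _) hθ

lemma ae_norm_sum_le {E ι : Type*} [NormedAddCommGroup E] {Y : ι → Θ → E} {R : ℝ}
    (hbd : ∀ i, ∀ᵐ θ ∂μ, ‖Y i θ‖ ≤ R) (s : Finset ι) :
    ∀ᵐ θ ∂μ, ‖∑ i ∈ s, Y i θ‖ ≤ #s * R := by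
  filter_upwards [(Filter.eventually_all_finset s).2 fun i _ => hbd i] with θ hθ
  exact (norm_sum_le_of_le s hθ).trans_eq (by simp)

lemma measure_ge_le_of_integral_cosh_le [IsFiniteMeasure μ] {S : Θ → ℝ} {l C : ℝ} (hl : 0 ≤ l)
    (hint : Integrable (fun θ => cosh (l * S θ)) μ) (hC : ∫ θ, cosh (l * S θ) ∂μ ≤ C) (t : ℝ) :
    μ {θ | t ≤ S θ} ≤ ENNReal.ofReal (2 * C * exp (-(l * t))) := by
  have hsub : {θ | t ≤ S θ} ⊆ {θ | exp (l * t) / 2 ≤ cosh (l * S θ)} := by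
    intro θ hθ
    have := exp_le_exp.2 (mul_le_mul_of_nonneg_left hθ hl)
    rw [Set.mem_ofPred, cosh_eq]
    linarith [exp_pos (-(l * S θ))]
  have hmarkov := mul_meas_ge_le_integral_of_nonneg
    (ae_of_all _ fun θ => (cosh_pos (l * S θ)).le) hint (exp (l * t) / 2)
  calc μ {θ | t ≤ S θ} ≤ μ {θ | exp (l * t) / 2 ≤ cosh (l * S θ)} := measure_mono hsub
    _ = ENNReal.ofReal (μ.real {θ | exp (l * t) / 2 ≤ cosh (l * S θ)}) :=
        (ofReal_measureReal).symm
    _ ≤ ENNReal.ofReal (2 * C * exp (-(l * t))) := by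
        gcongr
        rw [exp_neg, ← div_eq_mul_inv, le_div_iff₀ (exp_pos _)]
        linarith

end Integrals

section Independent

variable {Θ : Type*} [MeasurableSpace Θ] {μ : Measure Θ} [IsProbabilityMeasure μ]
  {F : Type*} [NormedAddCommGroup F] [InnerProductSpace ℝ F] [CompleteSpace F]

lemma integral_cosh_norm_add_le {Y : Θ → F} (hY : Integrable Y μ) (hmean : ∫ θ, Y θ ∂μ = 0)
    {R : ℝ} (hR : 0 ≤ R) (hbd : ∀ᵐ θ ∂μ, ‖Y θ‖ ≤ R) (x : F) :
    ∫ θ, cosh ‖x + Y θ‖ ∂μ ≤ cosh ‖x‖ * cosh R := by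
  set κ := sinh ‖x‖ * sinh R / (‖x‖ * R)
  have hint : Integrable (fun θ => cosh ‖x + Y θ‖) μ :=
    integrable_cosh_norm_of_ae_norm_le (C := ‖x‖ + R) (hY.aestronglyMeasurable.const_add x)
      (hbd.mono fun θ hθ => (norm_add_le _ _).trans (by gcongr))
  calc ∫ θ, cosh ‖x + Y θ‖ ∂μ ≤ ∫ θ, (cosh ‖x‖ * cosh R + ⟪x, Y θ⟫_ℝ * κ) ∂μ :=
        integral_mono_ae hint ((integrable_const _).add ((hY.const_inner x).mul_const κ))
          (hbd.mono fun θ hθ => cosh_norm_add_le x hR hθ)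
    _ = cosh ‖x‖ * cosh R := by
        rw [integral_add (integrable_const _) ((hY.const_inner x).mul_const κ), integral_const,
          integral_mul_const, integral_inner hY, hmean, inner_zero_right]
        simp

variable [SecondCountableTopology F] [MeasurableSpace F] [BorelSpace F]

lemma integral_cosh_norm_add_le_of_indepFun {W Y : Θ → F} (hW : Measurable W) (hY : Measurable Y)
    (hWY : IndepFun W Y μ) (hYint : Integrable Y μ) (hmean : ∫ θ, Y θ ∂μ = 0) {R B : ℝ}
    (hR : 0 ≤ R) (hYbd : ∀ᵐ θ ∂μ, ‖Y θ‖ ≤ R) (hWbd : ∀ᵐ θ ∂μ, ‖W θ‖ ≤ B) :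
    ∫ θ, cosh ‖W θ + Y θ‖ ∂μ ≤ (∫ θ, cosh ‖W θ‖ ∂μ) * cosh R := by
  have hpair : Measurable fun θ => (W θ, Y θ) := hW.prodMk hY
  have hlaw : μ.map (fun θ => (W θ, Y θ)) = (μ.map W).prod (μ.map Y) :=
    (indepFun_iff_map_prod_eq_prod_map_map hW.aemeasurable hY.aemeasurable).1 hWY
  have hf : Continuous fun p : F × F => cosh ‖p.1 + p.2‖ := by fun_prop
  have hfint : Integrable (fun p : F × F => cosh ‖p.1 + p.2‖) ((μ.map W).prod (μ.map Y)) := by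
    rw [← hlaw, integrable_map_measure hf.aestronglyMeasurable hpair.aemeasurable]
    exact integrable_cosh_norm_of_ae_norm_le (hW.add hY).aestronglyMeasurable
      ((hWbd.and hYbd).mono fun θ h => (norm_add_le _ _).trans (add_le_add h.1 h.2))
  have hWint : Integrable (fun w => cosh ‖w‖) (μ.map W) := by
    rw [integrable_map_measure (by fun_prop) hW.aemeasurable]
    exact integrable_cosh_norm_of_ae_norm_le hW.aestronglyMeasurable hWbd
  calc ∫ θ, cosh ‖W θ + Y θ‖ ∂μ = ∫ w, ∫ y, cosh ‖w + y‖ ∂(μ.map Y) ∂(μ.map W) := by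
        rw [← integral_prod _ hfint, ← hlaw, integral_map hpair.aemeasurable hf.aestronglyMeasurable]
    _ ≤ ∫ w, cosh ‖w‖ * cosh R ∂(μ.map W) := by
        refine integral_mono hfint.integral_prod_left (hWint.mul_const _) fun w => ?_
        rw [integral_map hY.aemeasurable (by fun_prop)]
        exact integral_cosh_norm_add_le hYint hmean hR hYbd w
    _ = (∫ θ, cosh ‖W θ‖ ∂μ) * cosh R := by
        rw [integral_mul_const, integral_map hW.aemeasurable (by fun_prop)]

variable {ι : Type*} {Y : ι → Θ → F} (hmeas : ∀ i, Measurable (Y i)) (hindep : iIndepFun Y μ)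
  (hint : ∀ i, Integrable (Y i) μ) (hmean : ∀ i, ∫ θ, Y i θ ∂μ = 0) {R : ℝ} (hR : 0 ≤ R)
  (hbd : ∀ i, ∀ᵐ θ ∂μ, ‖Y i θ‖ ≤ R)
include hmeas hindep hint hmean hR hbd

lemma integral_cosh_norm_sum_le (s : Finset ι) :
    ∫ θ, cosh ‖∑ i ∈ s, Y i θ‖ ∂μ ≤ cosh R ^ #s := by
  classical
  induction s using Finset.induction_on with
  | empty => simp
  | insert a s ha ih =>
    have hWY : IndepFun (fun θ => ∑ i ∈ s, Y i θ) (Y a) μ := by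
      simpa only [Finset.sum_fn] using hindep.indepFun_finsetSum_of_notMem hmeas ha
    simp_rw [sum_insert ha, add_comm (Y a _)]
    calc ∫ θ, cosh ‖∑ i ∈ s, Y i θ + Y a θ‖ ∂μ ≤ (∫ θ, cosh ‖∑ i ∈ s, Y i θ‖ ∂μ) * cosh R :=
          integral_cosh_norm_add_le_of_indepFun (s.measurable_sum fun i _ => hmeas i) (hmeas a)
            hWY (hint a) (hmean a) hR (hbd a) (ae_norm_sum_le hbd s)
      _ ≤ cosh R ^ #s * cosh R := by gcongr
      _ = cosh R ^ #(insert a s) := by rw [card_insert_of_notMem ha, pow_succ]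

lemma measure_norm_sum_ge_le (s : Finset ι) {l : ℝ} (hl : 0 ≤ l) (t : ℝ) :
    μ {θ | t ≤ ‖∑ i ∈ s, Y i θ‖} ≤ ENNReal.ofReal (2 * exp (#s * (l * R) ^ 2 / 2 - l * t)) := by
  have hscaled : ∫ θ, cosh ‖∑ i ∈ s, l • Y i θ‖ ∂μ ≤ cosh (l * R) ^ #s :=
    integral_cosh_norm_sum_le (Y := fun i θ => l • Y i θ) (fun i => (hmeas i).const_smul l)
      (hindep.comp _ fun _ => measurable_const_smul l) (fun i => (hint i).smul l)
      (fun i => by rw [integral_smul, hmean i, smul_zero]) (mul_nonneg hl hR)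
      (fun i => (hbd i).mono fun θ hθ => by rw [norm_smul, norm_of_nonneg hl]; gcongr) s
  simp_rw [← smul_sum, norm_smul, norm_of_nonneg hl] at hscaled
  have hint : Integrable (fun θ => cosh (l * ‖∑ i ∈ s, Y i θ‖)) μ := by
    simpa [norm_smul, norm_of_nonneg hl] using integrable_cosh_norm_of_ae_norm_le
      (f := fun θ => l • ∑ i ∈ s, Y i θ)
      ((s.measurable_sum fun i _ => hmeas i).const_smul l).aestronglyMeasurable
      ((ae_norm_sum_le hbd s).mono fun θ hθ => by
        rw [norm_smul, norm_of_nonneg hl]; exact mul_le_mul_of_nonneg_left hθ hl)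
  have hmgf : cosh (l * R) ^ #s ≤ exp (#s * (l * R) ^ 2 / 2) := by
    rw [mul_div_assoc, exp_nat_mul]
    gcongr
    exact cosh_le_exp_half_sq _
  refine (measure_ge_le_of_integral_cosh_le hl hint (hscaled.trans hmgf) t).trans_eq ?_
  rw [mul_assoc, ← exp_add, sub_eq_add_neg]

end Independent

theorem iid_hilbert_concentration_general
    {Θ : Type*} [MeasurableSpace Θ] (μ : Measure Θ) [IsProbabilityMeasure μ]
    {F : Type*} [NormedAddCommGroup F] [InnerProductSpace ℝ F] [CompleteSpace F]
    [TopologicalSpace.SeparableSpace F] [MeasurableSpace F] [BorelSpace F]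
    (n : ℕ) (X : Fin n → Θ → F)
    (hmeas : ∀ i, Measurable (X i))
    (hint : ∀ i, Integrable (X i) μ)
    (hindep : ProbabilityTheory.iIndepFun X μ)
    (R δ : ℝ) (hR : 0 < R) (hδ : 0 < δ)
    (hbd : ∀ i, ∀ᵐ θ ∂μ, ‖X i θ - ∫ θ', X i θ' ∂μ‖ ≤ R) :
    μ {θ | δ ≤ (n : ℝ)⁻¹ * ‖∑ i, (X i θ - ∫ θ', X i θ' ∂μ)‖} ≤
      ENNReal.ofReal (2 * Real.exp (-((n : ℝ) * δ ^ 2) / (2 * R ^ 2))) := by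
  have : SecondCountableTopology F := UniformSpace.secondCountable_of_separable F
  set Y : Fin n → Θ → F := fun i θ => X i θ - ∫ θ', X i θ' ∂μ with hY
  have hYindep : iIndepFun Y μ := hindep.comp _ fun i => measurable_id.sub_const _
  have hYmean : ∀ i, ∫ θ, Y i θ ∂μ = 0 := fun i => by
    rw [hY, integral_sub (hint i) (integrable_const _), integral_const]; simp
  have hsub : {θ | δ ≤ (n : ℝ)⁻¹ * ‖∑ i, Y i θ‖} ⊆ {θ | n * δ ≤ ‖∑ i, Y i θ‖} := fun θ hθ =>
    calc n * δ ≤ n * ((n : ℝ)⁻¹ * ‖∑ i, Y i θ‖) := by gcongr; exact hθ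
      _ = (n * (n : ℝ)⁻¹) * ‖∑ i, Y i θ‖ := (mul_assoc _ _ _).symm
      _ ≤ ‖∑ i, Y i θ‖ := mul_le_of_le_one_left (norm_nonneg _) mul_inv_le_one
  calc _ ≤ _ := measure_mono hsub
    _ ≤ ENNReal.ofReal (2 * exp (#univ * (δ / R ^ 2 * R) ^ 2 / 2 - δ / R ^ 2 * (n * δ))) :=
        measure_norm_sum_ge_le (fun i => (hmeas i).sub_const _) hYindep
          (fun i => (hint i).sub (integrable_const _)) hYmean hR.le hbd univ (by positivity) _
    _ = _ := by
        rw [card_univ, Fintype.card_fin]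
        congr 3
        field_simp
        ring

/-- **concentration for i.i.d. sums in a separable Hilbert space.**
If `X_1, …, X_n` are i.i.d. random variables in a separable Hilbert space with
`|X_i − E[X_i]| ≤ R` almost surely, then for any `δ > 0`,
`P((1/n) |Σ_i (X_i − E[X_i])| ≥ δ) ≤ 2 exp(−n δ²/(2R²))`. -/
theorem iid_hilbert_concentration
    {Θ : Type*} [MeasurableSpace Θ] (μ : Measure Θ) [IsProbabilityMeasure μ]
    {F : Type*} [NormedAddCommGroup F] [InnerProductSpace ℝ F] [CompleteSpace F]
    [TopologicalSpace.SeparableSpace F] [MeasurableSpace F] [BorelSpace F]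
    (n : ℕ) (hn : 1 ≤ n) (X : Fin n → Θ → F)
    (hmeas : ∀ i, Measurable (X i))
    (hint : ∀ i, Integrable (X i) μ)
    (hindep : ProbabilityTheory.iIndepFun X μ)
    (hid : ∀ i j, ProbabilityTheory.IdentDistrib (X i) (X j) μ μ)
    (R δ : ℝ) (hR : 0 < R) (hδ : 0 < δ)
    (hbd : ∀ i, ∀ᵐ θ ∂μ, ‖X i θ - ∫ θ', X i θ' ∂μ‖ ≤ R) :
    μ {θ | δ ≤ (n : ℝ)⁻¹ * ‖∑ i, (X i θ - ∫ θ', X i θ' ∂μ)‖} ≤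
      ENNReal.ofReal (2 * Real.exp (-((n : ℝ) * δ ^ 2) / (2 * R ^ 2))) :=
  iid_hilbert_concentration_general μ n X hmeas hint hindep R δ hR hδ hbd
end
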